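/- arXiv:2104.14012 — 2 statements merged into one kernel-verified Lean document; each statement's English description precedes it below -/
import Mathlib

section
/- Scale equivariance of the Kalman-filter rating recursion. Let M ≥ 1, let Y be a type of game outcomes, let g, h : ℝ → Y → ℝ be functions with h(z, y) ≥ 0 for all z, y, and let sequences x_t ∈ ℝ^M, β_t ∈ ℝ, y_t ∈ Y (t = 1, 2, …) be given. For parameters s > 0, v₀ > 0, ε_t ≥ 0, define the KF recursion: μ₀(s, v₀, ε) = 0 ∈ ℝ^M, V₀(s, v₀, ε) = v₀ I, and for t ≥ 1: V̄_t = β_t² V_{t-1} + ε_t I, ω_t = x_tᵀ V̄_t x_t, g_t = g(β_t x_tᵀ μ_{t-1} / s, y_t), h_t = h(β_t x_tᵀ μ_{t-1} / s, y_t), μ_t = β_t μ_{t-1} + V̄_t x_t · s g_t / (s² + h_t ω_t), V_t = V̄_t − V̄_t x_t x_tᵀ V̄_t · h_t / (s² + h_t ω_t). Then for every s > 0 and every t ≥ 0 one has μ_t(s, s² v₀, (s² ε_t)_t) = s · μ_t(1, v₀, (ε_t)_t) and V_t(s, s² v₀, (s² ε_t)_t) = s² · V_t(1, v₀, (ε_t)_t).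 -/
open Matrix

/-- One run of the Kalman-filter (KF) rating recursion: `KF g h x β y s v₀ ε t`
returns the pair `(μ_t, V_t)` of estimated mean skills and covariance matrix
after game `t`, with scale `s`, initial variance `v₀` and increment variances `ε`. -/
noncomputable def KF {M : ℕ} {Y : Type} (g h : ℝ → Y → ℝ)
    (x : ℕ → Fin M → ℝ) (β : ℕ → ℝ) (y : ℕ → Y)
    (s v₀ : ℝ) (ε : ℕ → ℝ) :
    ℕ → (Fin M → ℝ) × Matrix (Fin M) (Fin M) ℝ
  | 0 => (0, v₀ • (1 : Matrix (Fin M) (Fin M) ℝ))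
  | (t + 1) =>
    let μp := (KF g h x β y s v₀ ε t).1
    let Vp := (KF g h x β y s v₀ ε t).2
    let Vb := (β (t + 1)) ^ 2 • Vp + ε (t + 1) • (1 : Matrix (Fin M) (Fin M) ℝ)
    let ω := x (t + 1) ⬝ᵥ (Vb *ᵥ x (t + 1))
    let gt := g (β (t + 1) * (x (t + 1) ⬝ᵥ μp) / s) (y (t + 1))
    let ht := h (β (t + 1) * (x (t + 1) ⬝ᵥ μp) / s) (y (t + 1))
    (β (t + 1) • μp + (s * gt / (s ^ 2 + ht * ω)) • (Vb *ᵥ x (t + 1)),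
     Vb - (ht / (s ^ 2 + ht * ω)) • (Vb * vecMulVec (x (t + 1)) (x (t + 1)) * Vb))

/-- Scale equivariance of the KF rating recursion: running the recursion with scale `s`,
prior variance `s²v₀` and increments `s²ε_t` yields means scaled by `s` and
covariance matrices scaled by `s²` relative to the run with scale `1`. -/
theorem KF_scale_equivariant {M : ℕ} (hM : 1 ≤ M) {Y : Type} (g h : ℝ → Y → ℝ)
    (hh : ∀ z y, 0 ≤ h z y)
    (x : ℕ → Fin M → ℝ) (β : ℕ → ℝ) (y : ℕ → Y)
    (s v₀ : ℝ) (hs : 0 < s) (hv₀ : 0 < v₀)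
    (ε : ℕ → ℝ) (hε : ∀ t, 0 ≤ ε t) :
    ∀ t : ℕ,
      (KF g h x β y s (s ^ 2 * v₀) (fun u => s ^ 2 * ε u) t).1
          = s • (KF g h x β y 1 v₀ ε t).1 ∧
        (KF g h x β y s (s ^ 2 * v₀) (fun u => s ^ 2 * ε u) t).2
          = s ^ 2 • (KF g h x β y 1 v₀ ε t).2 := by
  have hs' : s ≠ 0 := ne_of_gt hs
  intro t
  induction t with
  | zero =>
    constructor
    · simp [KF]
    · simp [KF, smul_smul]
  | succ t ih =>
    obtain ⟨h1, h2⟩ := ih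
    simp only [KF, h1, h2]
    set μ' := (KF g h x β y 1 v₀ ε t).1 with hμ'
    set V' := (KF g h x β y 1 v₀ ε t).2 with hV'
    have hVb : (β (t+1))^2 • (s^2 • V') + (s^2 * ε (t+1)) • (1 : Matrix (Fin M) (Fin M) ℝ)
        = s^2 • ((β (t+1))^2 • V' + ε (t+1) • (1 : Matrix (Fin M) (Fin M) ℝ)) := by
      rw [smul_add, smul_smul, smul_smul, smul_smul, mul_comm (s^2) (β (t+1)^2)]
    rw [hVb]
    set Vb := (β (t+1))^2 • V' + ε (t+1) • (1:Matrix (Fin M) (Fin M) ℝ) with hVbdef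
    have hω : x (t+1) ⬝ᵥ ((s^2 • Vb) *ᵥ x (t+1)) = s^2 * (x (t+1) ⬝ᵥ (Vb *ᵥ x (t+1))) := by
      rw [smul_mulVec, dotProduct_smul, smul_eq_mul]
    have harg : β (t+1) * (x (t+1) ⬝ᵥ (s • μ')) / s = β (t+1) * (x (t+1) ⬝ᵥ μ') / 1 := by
      rw [dotProduct_smul, smul_eq_mul]; field_simp
    rw [hω, harg]
    set ω := x (t+1) ⬝ᵥ (Vb *ᵥ x (t+1)) with hωdef
    set gt := g (β (t+1) * (x (t+1) ⬝ᵥ μ') / 1) (y (t+1)) with hgt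
    set ht := h (β (t+1) * (x (t+1) ⬝ᵥ μ') / 1) (y (t+1)) with hht
    have key1 : s * gt / (s^2 + ht * (s^2 * ω)) * s^2 = s * (1 * gt / (1^2 + ht * ω)) := by
      rcases eq_or_ne (1 + ht * ω) 0 with hd | hd
      · have : s^2 + ht * (s^2 * ω) = s^2 * (1 + ht * ω) := by ring
        rw [this, hd, one_pow]
        have : (1:ℝ) + ht * ω = 0 := hd
        rw [this]
        simp
      · have h2 : s^2 + ht * (s^2 * ω) ≠ 0 := by
          intro hc
          apply hd
          have : s^2 * (1 + ht * ω) = 0 := by rw [← hc]; ring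
          rcases mul_eq_zero.mp this with h | h
          · exact absurd h (pow_ne_zero 2 hs')
          · exact h
        rw [one_pow]
        field_simp
    have key2 : ht / (s^2 + ht * (s^2 * ω)) * (s^2 * s^2) = s^2 * (ht / (1^2 + ht * ω)) := by
      rcases eq_or_ne (1 + ht * ω) 0 with hd | hd
      · have : s^2 + ht * (s^2 * ω) = s^2 * (1 + ht * ω) := by ring
        rw [this, hd, one_pow, hd]
        simp
      · have h2 : s^2 + ht * (s^2 * ω) ≠ 0 := by
          intro hc
          apply hd
          have : s^2 * (1 + ht * ω) = 0 := by rw [← hc]; ring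
          rcases mul_eq_zero.mp this with h | h
          · exact absurd h (pow_ne_zero 2 hs')
          · exact h
        rw [one_pow]
        field_simp
    constructor
    · rw [smul_mulVec, smul_smul, smul_smul, key1, mul_comm (β (t+1)) s, ← smul_smul, ← smul_smul, ← smul_add]
    · have hmul : (s^2 • Vb) * vecMulVec (x (t+1)) (x (t+1)) * (s^2 • Vb)
          = (s^2 * s^2) • (Vb * vecMulVec (x (t+1)) (x (t+1)) * Vb) := by
        rw [Matrix.smul_mul, Matrix.smul_mul, Matrix.mul_smul, smul_smul]
      rw [hmul, smul_smul, key2, ← smul_smul, ← smul_sub]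
end

section
/- Davidson Hessian formula. Let κ > 0, and define F_D(z) = 10^{z} / (10^{−z} + κ + 10^{z}). For y ∈ {0, 1, 2}, let L(z; 0) = F_D(−z), L(z; 1) = κ·√(F_D(z)·F_D(−z)), L(z; 2) = F_D(z), and ℓ(z; y) = log L(z; y). Then for every z ∈ ℝ and every y ∈ {0, 1, 2}, the negated second derivative in z of ℓ(z; y) equals (ln 10)² · (κ·10^{z} + 4 + κ·10^{−z}) / (10^{z} + κ + 10^{−z})²; in particular it does not depend on y and is strictly positive, so ℓ(·; y) is strictly concave. -/
/-- Davidson model function `F_D(z) = 10^z / (10^{−z} + κ + 10^z)`. -/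
noncomputable def FD (κ z : ℝ) : ℝ :=
  (10 : ℝ) ^ z / ((10 : ℝ) ^ (-z) + κ + (10 : ℝ) ^ z)

/-- Davidson outcome probability: `L(z; 0) = F_D(−z)` (away win),
`L(z; 1) = κ √(F_D(z) F_D(−z))` (draw), `L(z; 2) = F_D(z)` (home win). -/
noncomputable def LD (κ z y : ℝ) : ℝ :=
  if y = 0 then FD κ (-z)
  else if y = 1 then κ * Real.sqrt (FD κ z * FD κ (-z))
  else FD κ z

private lemma aux_hessian (κ : ℝ) (hκ : 0 < κ) (a c : ℝ) :
    (∀ z, -(deriv (deriv (fun w => c + a * w -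
          Real.log ((10 : ℝ) ^ w + κ + (10 : ℝ) ^ (-w)))) z)
        = (Real.log 10) ^ 2 * (κ * (10 : ℝ) ^ z + 4 + κ * (10 : ℝ) ^ (-z)) /
            ((10 : ℝ) ^ z + κ + (10 : ℝ) ^ (-z)) ^ 2) ∧
      StrictConcaveOn ℝ Set.univ
        (fun w => c + a * w - Real.log ((10 : ℝ) ^ w + κ + (10 : ℝ) ^ (-w))) := by
  have h10 : (0:ℝ) < 10 := by norm_num
  set S : ℝ → ℝ := fun w => (10 : ℝ) ^ w + κ + (10 : ℝ) ^ (-w) with hSdef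
  have hS : ∀ w, 0 < S w := by
    intro w
    have := Real.rpow_pos_of_pos h10 w
    have := Real.rpow_pos_of_pos h10 (-w)
    simp only [hSdef]
    positivity
  -- derivative of 10^w and 10^(-w)
  have hp : ∀ w : ℝ, HasDerivAt (fun x : ℝ => (10:ℝ) ^ x) ((10:ℝ) ^ w * Real.log 10) w :=
    fun w => (Real.hasStrictDerivAt_const_rpow h10 w).hasDerivAt
  have hm : ∀ w : ℝ, HasDerivAt (fun x : ℝ => (10:ℝ) ^ (-x))
      (-((10:ℝ) ^ (-w) * Real.log 10)) w := by
    intro w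
    have := (hp (-w)).comp w (hasDerivAt_neg w)
    exact this.congr_deriv (by ring)
  have hS' : ∀ w, HasDerivAt S (Real.log 10 * ((10:ℝ) ^ w - (10:ℝ) ^ (-w))) w := by
    intro w
    have h := ((hp w).add_const κ).add (hm w)
    exact h.congr_deriv (by ring)
  set N : ℝ → ℝ := fun w => Real.log 10 * ((10:ℝ) ^ w - (10:ℝ) ^ (-w)) with hNdef
  have hN' : ∀ w, HasDerivAt N ((Real.log 10) ^ 2 * ((10:ℝ) ^ w + (10:ℝ) ^ (-w))) w := by
    intro w
    have h := ((hp w).sub (hm w)).const_mul (Real.log 10)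
    exact h.congr_deriv (by ring)
  set D : ℝ → ℝ := fun w => N w / S w with hDdef
  set f : ℝ → ℝ := fun w => c + a * w - Real.log (S w) with hfdef
  have hf1 : ∀ w, HasDerivAt f (a - D w) w := by
    intro w
    have hlog : HasDerivAt (fun x => Real.log (S x)) (N w / S w) w :=
      (hS' w).log (ne_of_gt (hS w))
    have h := (((hasDerivAt_id w).const_mul a).const_add c).sub hlog
    exact h.congr_deriv (by simp [hDdef])
  have hderiv1 : deriv f = fun w => a - D w := funext fun w => (hf1 w).deriv
  have hD' : ∀ w, HasDerivAt D
      (((Real.log 10) ^ 2 * ((10:ℝ) ^ w + (10:ℝ) ^ (-w)) * S w - N w * N w) / S w ^ 2) w := by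
    intro w
    have h := (hN' w).div (hS' w) (ne_of_gt (hS w))
    exact h
  have hf2 : ∀ z, deriv (deriv f) z
      = -(((Real.log 10) ^ 2 * ((10:ℝ) ^ z + (10:ℝ) ^ (-z)) * S z - N z * N z) / S z ^ 2) := by
    intro z
    rw [hderiv1]
    exact (((hD' z).const_sub a)).deriv
  have key : ∀ z, -(deriv (deriv f) z)
      = (Real.log 10) ^ 2 * (κ * (10 : ℝ) ^ z + 4 + κ * (10 : ℝ) ^ (-z)) /
          ((10 : ℝ) ^ z + κ + (10 : ℝ) ^ (-z)) ^ 2 := by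
    intro z
    rw [hf2 z, neg_neg]
    have hu : (0:ℝ) < (10:ℝ) ^ z := Real.rpow_pos_of_pos h10 z
    have huv : (10:ℝ) ^ (-z) = ((10:ℝ) ^ z)⁻¹ := Real.rpow_neg (le_of_lt h10) z
    have hSz : S z = (10 : ℝ) ^ z + κ + (10 : ℝ) ^ (-z) := rfl
    have hNz : N z = Real.log 10 * ((10:ℝ) ^ z - (10:ℝ) ^ (-z)) := rfl
    rw [hSz, hNz, huv]
    have hS0 : (10 : ℝ) ^ z + κ + ((10:ℝ) ^ z)⁻¹ ≠ 0 := by positivity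
    field_simp
    ring
  constructor
  · exact key
  · apply strictConcaveOn_of_deriv2_neg convex_univ
    · exact Continuous.continuousOn (continuous_iff_continuousAt.2
        (fun w => (hf1 w).differentiableAt.continuousAt))
    · intro x _
      have hx : deriv (deriv f) x = -((Real.log 10) ^ 2 *
          (κ * (10 : ℝ) ^ x + 4 + κ * (10 : ℝ) ^ (-x)) /
          ((10 : ℝ) ^ x + κ + (10 : ℝ) ^ (-x)) ^ 2) := by
        rw [← key x, neg_neg]
      have hpos : 0 < (Real.log 10) ^ 2 *
          (κ * (10 : ℝ) ^ x + 4 + κ * (10 : ℝ) ^ (-x)) /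
          ((10 : ℝ) ^ x + κ + (10 : ℝ) ^ (-x)) ^ 2 := by
        have hl : 0 < Real.log 10 := Real.log_pos (by norm_num)
        have h1 : (0:ℝ) < (10:ℝ) ^ x := Real.rpow_pos_of_pos (by norm_num) x
        have h2 : (0:ℝ) < (10:ℝ) ^ (-x) := Real.rpow_pos_of_pos (by norm_num) (-x)
        apply div_pos
        · apply mul_pos (pow_pos hl 2)
          positivity
        · positivity
      show deriv^[2] f x < 0
      rw [show deriv^[2] f = deriv (deriv f) from rfl, hx]
      linarith

lemma hessian_pos (κ : ℝ) (hκ : 0 < κ) :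
    ∀ z : ℝ, 0 < (Real.log 10) ^ 2 * (κ * (10 : ℝ) ^ z + 4 + κ * (10 : ℝ) ^ (-z)) /
        ((10 : ℝ) ^ z + κ + (10 : ℝ) ^ (-z)) ^ 2 := by
  intro z
  have hl : 0 < Real.log 10 := Real.log_pos (by norm_num)
  have h1 : (0:ℝ) < (10:ℝ) ^ z := Real.rpow_pos_of_pos (by norm_num) z
  have h2 : (0:ℝ) < (10:ℝ) ^ (-z) := Real.rpow_pos_of_pos (by norm_num) (-z)
  apply div_pos
  · apply mul_pos (pow_pos hl 2); positivity
  · positivity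

/-- Davidson Hessian formula: for `κ > 0` and `y ∈ {0, 1, 2}`, the negated second
derivative in `z` of `ℓ(z; y) = log L(z; y)` equals
`(ln 10)² (κ·10^z + 4 + κ·10^{−z}) / (10^z + κ + 10^{−z})²`; in particular it does
not depend on `y` and is strictly positive, so `ℓ(·; y)` is strictly concave. -/
theorem davidson_hessian (κ : ℝ) (hκ : 0 < κ) (y : ℝ)
    (hy : y = 0 ∨ y = 1 ∨ y = 2) :
    (∀ z, -(deriv (deriv (fun w => Real.log (LD κ w y))) z)
        = (Real.log 10) ^ 2 * (κ * (10 : ℝ) ^ z + 4 + κ * (10 : ℝ) ^ (-z)) /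
            ((10 : ℝ) ^ z + κ + (10 : ℝ) ^ (-z)) ^ 2) ∧
      (∀ z : ℝ, 0 < (Real.log 10) ^ 2 * (κ * (10 : ℝ) ^ z + 4 + κ * (10 : ℝ) ^ (-z)) /
          ((10 : ℝ) ^ z + κ + (10 : ℝ) ^ (-z)) ^ 2) ∧
      StrictConcaveOn ℝ Set.univ (fun z => Real.log (LD κ z y)) := by
  have h10 : (0:ℝ) < 10 := by norm_num
  have hS : ∀ w : ℝ, 0 < (10 : ℝ) ^ w + κ + (10 : ℝ) ^ (-w) := by
    intro w
    have := Real.rpow_pos_of_pos h10 w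
    have := Real.rpow_pos_of_pos h10 (-w)
    positivity
  -- rewrite log (LD κ w y) as c + a * w - log S w for suitable a, c
  obtain ⟨a, c, hac⟩ : ∃ a c : ℝ, (fun w => Real.log (LD κ w y))
      = fun w => c + a * w - Real.log ((10 : ℝ) ^ w + κ + (10 : ℝ) ^ (-w)) := by
    rcases hy with rfl | rfl | rfl
    · refine ⟨-Real.log 10, 0, funext fun w => ?_⟩
      have : LD κ w 0 = (10 : ℝ) ^ (-w) / ((10 : ℝ) ^ w + κ + (10 : ℝ) ^ (-w)) := by
        simp [LD, FD, neg_neg]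
      rw [this, Real.log_div (ne_of_gt (Real.rpow_pos_of_pos h10 (-w))) (ne_of_gt (hS w)),
        Real.log_rpow h10]
      ring
    · refine ⟨0, Real.log κ, funext fun w => ?_⟩
      have h1 : LD κ w 1 = κ * Real.sqrt (FD κ w * FD κ (-w)) := by
        norm_num [LD]
      have h2 : FD κ w * FD κ (-w)
          = (1 / ((10 : ℝ) ^ w + κ + (10 : ℝ) ^ (-w))) ^ 2 := by
        have huv : (10:ℝ) ^ w * (10:ℝ) ^ (-w) = 1 := by
          rw [← Real.rpow_add h10]; simp
        simp only [FD, neg_neg]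
        rw [div_mul_div_comm, huv, div_pow, one_pow]
        congr 1
        ring
      have h3 : LD κ w 1 = κ * (1 / ((10 : ℝ) ^ w + κ + (10 : ℝ) ^ (-w))) := by
        rw [h1, h2, Real.sqrt_sq (by positivity)]
      rw [h3, Real.log_mul (ne_of_gt hκ) (by positivity),
        Real.log_div one_ne_zero (ne_of_gt (hS w)), Real.log_one]
      ring
    · refine ⟨Real.log 10, 0, funext fun w => ?_⟩
      have : LD κ w 2 = (10 : ℝ) ^ w / ((10 : ℝ) ^ w + κ + (10 : ℝ) ^ (-w)) := by
        norm_num [LD, FD]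
        ring_nf
      rw [this, Real.log_div (ne_of_gt (Real.rpow_pos_of_pos h10 w)) (ne_of_gt (hS w)),
        Real.log_rpow h10]
      ring
  rw [hac]
  obtain ⟨hkey, hconc⟩ := aux_hessian κ hκ a c
  exact ⟨hkey, hessian_pos κ hκ, hconc⟩
end
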